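/- arXiv:math/0312055 — 3 statements merged into one kernel-verified Lean document; each statement's English description precedes it below -/
import Mathlib

section
/- Fix (a₀,a₁) ∈ ℂ²∖{0} and let L be the ruling line of points of P¹×P¹ with first coordinate [a₀:a₁]. Then the set of forms f ∈ V that are singular at every point of L equals (a₁x₀ − a₀x₁)² · V₍₁,₃₎, where V₍₁,₃₎ is the space of bihomogeneous forms of bidegree (1,3); in particular this set is a complex linear subspace of V of dimension 8 (codimension 8). -/
open MvPolynomial

noncomputable section

/-- The polynomial ring `ℂ[x₀, x₁, y₀, y₁]`, with variables indexed by `Fin 4`: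
`x₀ = X 0`, `x₁ = X 1`, `y₀ = X 2`, `y₁ = X 3`. -/
abbrev P4 : Type := MvPolynomial (Fin 4) ℂ

/-- Weights picking out the degree in the variables `x₀, x₁`. -/
def wx : Fin 4 → ℕ := ![1, 1, 0, 0]

/-- Weights picking out the degree in the variables `y₀, y₁`. -/
def wy : Fin 4 → ℕ := ![0, 0, 1, 1]

/-- The 16-dimensional space `V` of bihomogeneous forms of bidegree `(3,3)`. -/
def V33 : Submodule ℂ P4 :=
  weightedHomogeneousSubmodule ℂ wx 3 ⊓ weightedHomogeneousSubmodule ℂ wy 3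

/-- A form `f` is singular at the point with representative `p ∈ ℂ⁴` if all four partial
derivatives of `f` vanish at `p`. -/
def SingularAt (f : P4) (p : Fin 4 → ℂ) : Prop :=
  ∀ i : Fin 4, eval p (pderiv i f) = 0

/-- The 8-dimensional space of bihomogeneous forms of bidegree `(1,3)`. -/
def V13 : Submodule ℂ P4 :=
  weightedHomogeneousSubmodule ℂ wx 1 ⊓ weightedHomogeneousSubmodule ℂ wy 3


/-!
Write `f = ∑ⱼ Fⱼ(x₀, x₁) y₀^(3-j) y₁^j` with binary cubics `Fⱼ`. At a point `(a, b)` of `L` the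
partial derivative `∂f/∂xᵢ` is a binary cubic in `b` with coefficients `∂Fⱼ/∂xᵢ(a)`, so it
vanishes for all `b` exactly when every `Fⱼ` has a critical point at `a`. By Euler's formula such
a critical point is a root, hence a double root, and `ℓ² ∣ Fⱼ` for `ℓ = a₁x₀ − a₀x₁`. Conversely
`ℓ²g` is singular wherever `ℓ` vanishes. The dimension is that of `V₍₁,₃₎`, read off from its
monomial basis, since multiplication by `ℓ²` is injective.
-/

section BinaryCubic

variable {K : Type*} [Field K] [CharZero K]

theorem eq_zero_of_forall_binary_cubic_eq_zero (q : Fin 4 → K)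
    (h : ∀ b₀ b₁ : K, ¬(b₀ = 0 ∧ b₁ = 0) →
      ∑ j : Fin 4, q j * b₀ ^ (3 - (j : ℕ)) * b₁ ^ (j : ℕ) = 0) :
    q = 0 := by
  have h₀ : q 0 = 0 := by simpa [Fin.sum_univ_four] using h 1 0 (by simp)
  have h₃ : q 3 = 0 := by simpa [Fin.sum_univ_four] using h 0 1 (by simp)
  have hplus : q 0 + q 1 + q 2 + q 3 = 0 := by simpa [Fin.sum_univ_four] using h 1 1 (by simp)
  have hminus : q 0 - q 1 + q 2 - q 3 = 0 := by
    simpa [Fin.sum_univ_four, sub_eq_add_neg, Odd.neg_one_pow (by decide : Odd 3)] using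
      h 1 (-1) (by simp)
  have h₁ : q 1 = 0 := by linear_combination (hplus - hminus - 2 * h₃) / 2
  have h₂ : q 2 = 0 := by linear_combination (hplus + hminus - 2 * h₀) / 2
  funext j
  fin_cases j
  exacts [h₀, h₁, h₂, h₃]

/-- The conclusion lists the coefficients of `(a₁x₀ - a₀x₁)² (ux₀ + vx₁)`. -/
theorem exists_coeffs_of_double_root {a₀ a₁ : K} (ha : ¬(a₀ = 0 ∧ a₁ = 0)) {c₀ c₁ c₂ c₃ : K}
    (h₀ : 3 * c₀ * a₀ ^ 2 + 2 * c₁ * a₀ * a₁ + c₂ * a₁ ^ 2 = 0)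
    (h₁ : c₁ * a₀ ^ 2 + 2 * c₂ * a₀ * a₁ + 3 * c₃ * a₁ ^ 2 = 0) :
    ∃ u v : K, c₀ = a₁ ^ 2 * u ∧ c₁ = a₁ ^ 2 * v - 2 * a₀ * a₁ * u ∧
      c₂ = a₀ ^ 2 * u - 2 * a₀ * a₁ * v ∧ c₃ = a₀ ^ 2 * v := by
  by_cases ha₀ : a₀ = 0
  · subst ha₀
    have ha₁ : a₁ ≠ 0 := by tauto
    refine ⟨c₀ / a₁ ^ 2, c₁ / a₁ ^ 2, by field_simp, by field_simp; ring, ?_, ?_⟩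
    · simpa [ha₁] using h₀
    · simpa [ha₁] using h₁
  · refine ⟨(c₂ * a₀ ^ 2 + 2 * a₀ * a₁ * c₃) / a₀ ^ 4, c₃ / a₀ ^ 2, ?_, ?_, ?_, by field_simp⟩
    · field_simp
      linear_combination (a₀ * h₀ - 2 * a₁ * h₁) / 3
    · field_simp
      linear_combination h₁
    · field_simp
      ring

end BinaryCubic

lemma weight_wx (d : Fin 4 →₀ ℕ) : Finsupp.weight wx d = d 0 + d 1 := by
  simp [Finsupp.weight_apply, Finsupp.sum_fintype, Fin.sum_univ_four, wx]

lemma weight_wy (d : Fin 4 →₀ ℕ) : Finsupp.weight wy d = d 2 + d 3 := by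
  simp [Finsupp.weight_apply, Finsupp.sum_fintype, Fin.sum_univ_four, wy]

def bihomogeneousSubmodule (m n : ℕ) : Submodule ℂ P4 :=
  weightedHomogeneousSubmodule ℂ wx m ⊓ weightedHomogeneousSubmodule ℂ wy n

lemma mul_mem_bihomogeneousSubmodule {m n m' n' : ℕ} {f g : P4}
    (hf : f ∈ bihomogeneousSubmodule m n) (hg : g ∈ bihomogeneousSubmodule m' n') :
    f * g ∈ bihomogeneousSubmodule (m + m') (n + n') :=
  ⟨hf.1.mul hg.1, hf.2.mul hg.2⟩

lemma X_mem_bihomogeneousSubmodule (i : Fin 4) :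
    X i ∈ bihomogeneousSubmodule (wx i) (wy i) :=
  ⟨isWeightedHomogeneous_X ℂ wx i, isWeightedHomogeneous_X ℂ wy i⟩

def bidegreeExponents (m n : ℕ) : Set (Fin 4 →₀ ℕ) := {d | d 0 + d 1 = m ∧ d 2 + d 3 = n}

lemma bihomogeneousSubmodule_eq_restrictSupport (m n : ℕ) :
    bihomogeneousSubmodule m n = restrictSupport ℂ (bidegreeExponents m n) := by
  ext f
  rw [bihomogeneousSubmodule, weightedHomogeneousSubmodule_eq_finsupp_supported,
    weightedHomogeneousSubmodule_eq_finsupp_supported, Submodule.mem_inf]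
  simp only [AddMonoidAlgebra.mem_supported, weight_wx, weight_wy]
  exact Set.subset_inter_iff.symm

def bimonomialExponent (m n i j : ℕ) : Fin 4 →₀ ℕ :=
  Finsupp.single 0 (m - i) + Finsupp.single 1 i + Finsupp.single 2 (n - j) + Finsupp.single 3 j

def bidegreeExponentsEquiv (m n : ℕ) : bidegreeExponents m n ≃ Fin (m + 1) × Fin (n + 1) where
  toFun d := (⟨d.1 1, by have := d.2.1; omega⟩, ⟨d.1 3, by have := d.2.2; omega⟩)
  invFun p := ⟨bimonomialExponent m n p.1 p.2, by
    have := p.1.2; have := p.2.2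
    simp [bidegreeExponents, bimonomialExponent]; omega⟩
  left_inv d := by
    obtain ⟨d, h₀, h₁⟩ := d
    ext k
    fin_cases k <;> simp [bimonomialExponent] <;> omega
  right_inv p := by ext <;> simp [bimonomialExponent]

def bihomogeneousBasis (m n : ℕ) :
    Module.Basis (Fin (m + 1) × Fin (n + 1)) ℂ (bihomogeneousSubmodule m n) :=
  ((basisRestrictSupport ℂ _).reindex (bidegreeExponentsEquiv m n)).map
    (LinearEquiv.ofEq _ _ (bihomogeneousSubmodule_eq_restrictSupport m n).symm)

lemma bihomogeneousBasis_apply (m n : ℕ) (p : Fin (m + 1) × Fin (n + 1)) :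
    (bihomogeneousBasis m n p : P4) =
      X 0 ^ (m - p.1 : ℕ) * X 1 ^ (p.1 : ℕ) * X 2 ^ (n - p.2 : ℕ) * X 3 ^ (p.2 : ℕ) := by
  have hb (d) : basisRestrictSupport ℂ (bidegreeExponents m n) d =
      ⟨monomial d.1 1, by simp only [monomial_mem_restrictSupport, d.2, true_or]⟩ := by
    apply (basisRestrictSupport ℂ _).repr.injective
    rw [Module.Basis.repr_self]
    ext e
    change Finsupp.single d 1 e = coeff e.1 (monomial d.1 (1 : ℂ))
    simp only [Finsupp.single_apply, coeff_monomial, Subtype.ext_iff]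
  simp only [bihomogeneousBasis, Module.Basis.map_apply, Module.Basis.reindex_apply, hb,
    LinearEquiv.coe_ofEq_apply]
  change monomial (bimonomialExponent m n p.1 p.2) 1 = _
  simp only [X_pow_eq_monomial, monomial_mul, bimonomialExponent, mul_one]

lemma finrank_bihomogeneousSubmodule (m n : ℕ) :
    Module.finrank ℂ (bihomogeneousSubmodule m n) = (m + 1) * (n + 1) := by
  simp [Module.finrank_eq_card_basis (bihomogeneousBasis m n)]

lemma eval_pderiv_zero_sum_basis (c : Fin 4 × Fin 4 → ℂ) (a₀ a₁ b₀ b₁ : ℂ) :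
    eval ![a₀, a₁, b₀, b₁] (pderiv 0 (∑ p, c p • (bihomogeneousBasis 3 3 p : P4))) =
      ∑ j : Fin 4, (3 * c (0, j) * a₀ ^ 2 + 2 * c (1, j) * a₀ * a₁ + c (2, j) * a₁ ^ 2) *
        b₀ ^ (3 - (j : ℕ)) * b₁ ^ (j : ℕ) := by
  simp [bihomogeneousBasis_apply, Fintype.sum_prod_type, Fin.sum_univ_four]
  ring

lemma eval_pderiv_one_sum_basis (c : Fin 4 × Fin 4 → ℂ) (a₀ a₁ b₀ b₁ : ℂ) :
    eval ![a₀, a₁, b₀, b₁] (pderiv 1 (∑ p, c p • (bihomogeneousBasis 3 3 p : P4))) =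
      ∑ j : Fin 4, (c (1, j) * a₀ ^ 2 + 2 * c (2, j) * a₀ * a₁ + 3 * c (3, j) * a₁ ^ 2) *
        b₀ ^ (3 - (j : ℕ)) * b₁ ^ (j : ℕ) := by
  simp [bihomogeneousBasis_apply, Fintype.sum_prod_type, Fin.sum_univ_four]
  ring

lemma linearForm_mem_bihomogeneousSubmodule (a₀ a₁ : ℂ) :
    C a₁ * X 0 - C a₀ * X 1 ∈ bihomogeneousSubmodule 1 0 := by
  rw [← smul_eq_C_mul, ← smul_eq_C_mul]
  exact sub_mem (Submodule.smul_mem _ _ (X_mem_bihomogeneousSubmodule 0))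
    (Submodule.smul_mem _ _ (X_mem_bihomogeneousSubmodule 1))

lemma linearForm_ne_zero {a₀ a₁ : ℂ} (ha : ¬(a₀ = 0 ∧ a₁ = 0)) :
    (C a₁ * X 0 - C a₀ * X 1 : P4) ≠ 0 := by
  intro h
  refine ha ⟨?_, ?_⟩
  · simpa using congrArg (eval ![0, 1, 0, 0]) h
  · simpa using congrArg (eval ![1, 0, 0, 0]) h

lemma eval_linearForm (a₀ a₁ b₀ b₁ : ℂ) :
    eval ![a₀, a₁, b₀, b₁] (C a₁ * X 0 - C a₀ * X 1) = 0 := by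
  simp [mul_comm]

lemma sq_mul_mem_V33 (a₀ a₁ : ℂ) {g : P4} (hg : g ∈ V13) :
    (C a₁ * X 0 - C a₀ * X 1) ^ 2 * g ∈ V33 := by
  have hℓ := linearForm_mem_bihomogeneousSubmodule a₀ a₁
  rw [sq]
  exact mul_mem_bihomogeneousSubmodule (mul_mem_bihomogeneousSubmodule hℓ hℓ) hg

lemma singularAt_sq_mul_of_eval_eq_zero {h : P4} {p : Fin 4 → ℂ} (hp : eval p h = 0) (g : P4) :
    SingularAt (h ^ 2 * g) p := by
  intro i
  simp [Derivation.leibniz, Derivation.leibniz_pow, hp]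

lemma exists_mem_V13_of_singularAt {a₀ a₁ : ℂ} (ha : ¬(a₀ = 0 ∧ a₁ = 0)) {f : P4} (hf : f ∈ V33)
    (hsing : ∀ b₀ b₁ : ℂ, ¬(b₀ = 0 ∧ b₁ = 0) → SingularAt f ![a₀, a₁, b₀, b₁]) :
    ∃ g ∈ V13, f = (C a₁ * X 0 - C a₀ * X 1) ^ 2 * g := by
  set c := (bihomogeneousBasis 3 3).repr ⟨f, hf⟩
  have hfc : f = ∑ p, c p • (bihomogeneousBasis 3 3 p : P4) := by
    simpa only [Submodule.coe_sum, Submodule.coe_smul] using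
      (congrArg Subtype.val ((bihomogeneousBasis 3 3).sum_repr ⟨f, hf⟩)).symm
  have hx₀ : ∀ j : Fin 4, 3 * c (0, j) * a₀ ^ 2 + 2 * c (1, j) * a₀ * a₁ + c (2, j) * a₁ ^ 2 = 0 :=
    congrFun <| eq_zero_of_forall_binary_cubic_eq_zero _ fun b₀ b₁ hb => by
      rw [← eval_pderiv_zero_sum_basis, ← hfc]
      exact hsing b₀ b₁ hb 0
  have hx₁ : ∀ j : Fin 4, c (1, j) * a₀ ^ 2 + 2 * c (2, j) * a₀ * a₁ + 3 * c (3, j) * a₁ ^ 2 = 0 :=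
    congrFun <| eq_zero_of_forall_binary_cubic_eq_zero _ fun b₀ b₁ hb => by
      rw [← eval_pderiv_one_sum_basis, ← hfc]
      exact hsing b₀ b₁ hb 1
  choose u v h₀ h₁ h₂ h₃ using fun j => exists_coeffs_of_double_root ha (hx₀ j) (hx₁ j)
  refine ⟨∑ j, (u j • (bihomogeneousBasis 1 3 (0, j) : P4) + v j • bihomogeneousBasis 1 3 (1, j)),
    sum_mem fun j _ => add_mem (Submodule.smul_mem _ _ (Subtype.mem _))
      (Submodule.smul_mem _ _ (Subtype.mem _)), ?_⟩
  rw [hfc]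
  simp [bihomogeneousBasis_apply, Fintype.sum_prod_type, Fin.sum_univ_four, h₀, h₁, h₂, h₃,
    smul_eq_C_mul, map_ofNat]
  ring

/-- Fix `(a₀, a₁) ∈ ℂ² ∖ {0}` and let `L` be the ruling line of points of `P¹ × P¹` with first
coordinate `[a₀ : a₁]`. The set of forms `f ∈ V` singular at every point of `L` equals
`(a₁x₀ − a₀x₁)² · V₍₁,₃₎`; in particular it is a complex linear subspace of `V` of
dimension `8` (codimension 8). -/
theorem singular_along_ruling_line
    (a₀ a₁ : ℂ) (ha : ¬(a₀ = 0 ∧ a₁ = 0)) :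
    ∃ S : Submodule ℂ P4,
      (S : Set P4) =
        {f : P4 | f ∈ V33 ∧ ∀ b₀ b₁ : ℂ, ¬(b₀ = 0 ∧ b₁ = 0) → SingularAt f ![a₀, a₁, b₀, b₁]} ∧
      (S : Set P4) = {f : P4 | ∃ g ∈ V13, f = (C a₁ * X 0 - C a₀ * X 1) ^ 2 * g} ∧
      Module.finrank ℂ S = 8 := by
  refine ⟨V13.map (LinearMap.mulLeft ℂ ((C a₁ * X 0 - C a₀ * X 1) ^ 2)), ?_, ?_, ?_⟩
  · ext f
    constructor
    · rintro ⟨g, hg, rfl⟩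
      exact ⟨sq_mul_mem_V33 a₀ a₁ hg, fun b₀ b₁ _ =>
        singularAt_sq_mul_of_eval_eq_zero (eval_linearForm a₀ a₁ b₀ b₁) g⟩
    · rintro ⟨hf, hsing⟩
      obtain ⟨g, hg, rfl⟩ := exists_mem_V13_of_singularAt ha hf hsing
      exact ⟨g, hg, rfl⟩
  · ext f
    simp [eq_comm]
  · rw [LinearEquiv.finrank_eq (Submodule.equivMapOfInjective _
      (mul_right_injective₀ (pow_ne_zero 2 (linearForm_ne_zero ha))) V13).symm]
    exact finrank_bihomogeneousSubmodule 1 3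

end
end

section
/- The space W of weighted homogeneous polynomials of weighted degree 6 in ℂ[x,y,z] (weights 1,1,2) has complex dimension 16, and for every (x₀,y₀,z₀) ∈ ℂ³ with (x₀,y₀) ≠ (0,0), the set of f ∈ W whose three partial derivatives ∂f/∂x, ∂f/∂y, ∂f/∂z all vanish at (x₀,y₀,z₀) is a complex linear subspace of W of dimension 13 (codimension 3). -/
/-!
`W` has the monomials `x^a y^b z^c` with `a + b + 2c = 6` as a basis, and there are 16 of them.
The forms singular at `p` are the kernel of the gradient map `W → ℂ³`, so it suffices that this
map is onto. If, say, `x₀ ≠ 0`, put `ℓ = x / x₀`, so that `ℓ(p) = 1`. For each variable `v` of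
weight `k`, `v ℓ^(6-k) ∈ W` has gradient `e_v + c ∇ℓ` at `p`, while `ℓ^6` has gradient `6 ∇ℓ`;
hence every basis vector `e_v` is a gradient.
-/

open MvPolynomial

noncomputable section

/-- The polynomial ring `ℂ[x, y, z]`, with variables indexed by `Fin 3`:
`x = X 0`, `y = X 1`, `z = X 2`. -/
abbrev P3 : Type := MvPolynomial (Fin 3) ℂ

/-- The weights `wt(x) = wt(y) = 1`, `wt(z) = 2`. -/
def w112 : Fin 3 → ℕ := ![1, 1, 2]

/-- The space `W` of weighted homogeneous polynomials of weighted degree `6`. -/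
def W6 : Submodule ℂ P3 := weightedHomogeneousSubmodule ℂ w112 6

/-- A form `f` is singular at the point of the cone `P(1,1,2)` with representative `p ∈ ℂ³`
if the three partial derivatives of `f` all vanish at `p`. -/
def SingAt (f : P3) (p : Fin 3 → ℂ) : Prop :=
  ∀ i : Fin 3, eval p (pderiv i f) = 0

theorem Submodule.finrank_inf_ker_add_finrank {K M N : Type*} [DivisionRing K]
    [AddCommGroup M] [Module K M] [AddCommGroup N] [Module K N]
    (V : Submodule K M) [FiniteDimensional K V] (L : M →ₗ[K] N) (hL : V.map L = ⊤) :
    Module.finrank K ↥(V ⊓ LinearMap.ker L) + Module.finrank K N = Module.finrank K V := by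
  have h := (L.domRestrict V).finrank_range_add_finrank_ker
  rwa [LinearMap.range_domRestrict, hL, finrank_top, LinearMap.ker_domRestrict,
    ← Submodule.finrank_map_subtype_eq, Submodule.map_comap_subtype, add_comm] at h

namespace MvPolynomial

variable {R K σ : Type*} [CommSemiring R] [Field K]

theorem finrank_weightedHomogeneousSubmodule [Finite σ] {w : σ → ℕ} (hw : ∀ i, w i ≠ 0)
    (n : ℕ) : Module.finrank K (weightedHomogeneousSubmodule K w n) =
      Nat.card {d : σ →₀ ℕ | Finsupp.weight w d = n} := by
  have := (Finsupp.finite_of_nat_weight_eq w hw n).to_subtype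
  rw [weightedHomogeneousSubmodule_eq_finsupp_supported]
  exact Module.finrank_eq_nat_card_basis (basisRestrictSupport K _)

def gradAt (p : σ → R) : MvPolynomial σ R →ₗ[R] σ → R :=
  LinearMap.pi fun i => (aeval p).toLinearMap ∘ₗ (pderiv i).toLinearMap

theorem gradAt_apply (p : σ → R) (f : MvPolynomial σ R) (i : σ) :
    gradAt p f i = eval p (pderiv i f) := by
  simp [gradAt]

theorem gradAt_X [DecidableEq σ] (p : σ → R) (j : σ) : gradAt p (X j) = Pi.single j 1 := by
  ext i
  simp [gradAt_apply, Pi.single_apply, eq_comm]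

@[simp]
theorem gradAt_one (p : σ → R) : gradAt p 1 = 0 := by
  ext i
  simp [gradAt_apply]

theorem gradAt_mul_pow_of_eval_eq_one {p : σ → R} {ℓ : MvPolynomial σ R} (hℓ : eval p ℓ = 1)
    (f : MvPolynomial σ R) (n : ℕ) :
    gradAt p (f * ℓ ^ n) = gradAt p f + (n * eval p f) • gradAt p ℓ := by
  ext i
  simp [gradAt_apply, hℓ]
  ring

theorem map_gradAt_weightedHomogeneousSubmodule_eq_top [Fintype σ] [DecidableEq σ]
    {w : σ → ℕ} {n : ℕ} (hn : (n : K) ≠ 0) (hw : ∀ j, w j ≤ n) {p : σ → K} {i : σ}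
    (hi : w i = 1) (hpi : p i ≠ 0) :
    (weightedHomogeneousSubmodule K w n).map (gradAt p) = ⊤ := by
  set V := weightedHomogeneousSubmodule K w n
  set ℓ : MvPolynomial σ K := C (p i)⁻¹ * X i
  have hℓ : IsWeightedHomogeneous w ℓ 1 := by
    simpa [hi] using (isWeightedHomogeneous_C w (p i)⁻¹).mul (isWeightedHomogeneous_X K w i)
  have hpℓ : eval p ℓ = 1 := by simp [ℓ, hpi]
  have hℓn : ℓ ^ n ∈ V := by simpa [V, mem_weightedHomogeneousSubmodule] using hℓ.pow n
  rw [eq_top_iff, ← (Pi.basisFun K σ).span_eq, Submodule.span_le]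
  rintro _ ⟨j, rfl⟩
  have hXj : X j * ℓ ^ (n - w j) ∈ V := by
    simpa [V, mem_weightedHomogeneousSubmodule, Nat.add_sub_cancel' (hw j)] using
      (isWeightedHomogeneous_X K w j).mul (hℓ.pow (n - w j))
  refine ⟨X j * ℓ ^ (n - w j) - ((n - w j : ℕ) * p j / n) • ℓ ^ n,
    V.sub_mem hXj (V.smul_mem _ hℓn), ?_⟩
  have hgradℓn := gradAt_mul_pow_of_eval_eq_one hpℓ 1 n
  rw [one_mul] at hgradℓn
  simp [gradAt_mul_pow_of_eval_eq_one hpℓ, hgradℓn, gradAt_X, smul_smul, div_mul_cancel₀ _ hn]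

end MvPolynomial

theorem weight_w112_apply (d : Fin 3 →₀ ℕ) : Finsupp.weight w112 d = d 0 + d 1 + 2 * d 2 := by
  simp [Finsupp.weight_apply, Finsupp.sum_fintype, Fin.sum_univ_three, w112, mul_comm]

theorem card_weight_w112_eq_six : Nat.card {d : Fin 3 →₀ ℕ | Finsupp.weight w112 d = 6} = 16 := by
  have : {d : Fin 3 →₀ ℕ | Finsupp.weight w112 d = 6} =
      ((Fintype.piFinset fun _ : Fin 3 => Finset.range 7).filter
        (fun f => f 0 + f 1 + 2 * f 2 = 6)).map Finsupp.equivFunOnFinite.symm.toEmbedding := by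
    ext d
    simp [weight_w112_apply, Fin.forall_fin_succ]
    omega
  rw [this, Nat.card_coe_set_eq, Set.ncard_coe_finset, Finset.card_map]
  decide

theorem finrank_W6 : Module.finrank ℂ W6 = 16 := by
  rw [W6, finrank_weightedHomogeneousSubmodule (by simp [Fin.forall_fin_succ, w112]),
    card_weight_w112_eq_six]

theorem singAt_iff_gradAt_eq_zero (f : P3) (p : Fin 3 → ℂ) : SingAt f p ↔ gradAt p f = 0 := by
  simp [SingAt, funext_iff, gradAt_apply]

/-- `W` has complex dimension 16, and for every non-vertex point of the weighted projective
plane `P(1,1,2)` (represented by `(x₀,y₀,z₀)` with `(x₀,y₀) ≠ (0,0)`), the set of `f ∈ W`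
singular there is a complex linear subspace of `W` of dimension `13` (codimension 3). -/
theorem cone_dim_sixteen_and_singular_at_point_codim_three :
    Module.finrank ℂ W6 = 16 ∧
    ∀ x₀ y₀ z₀ : ℂ, ¬(x₀ = 0 ∧ y₀ = 0) →
      ∃ S : Submodule ℂ P3,
        (S : Set P3) = {f : P3 | f ∈ W6 ∧ SingAt f ![x₀, y₀, z₀]} ∧
        Module.finrank ℂ S = 13 := by
  refine ⟨finrank_W6, fun x₀ y₀ z₀ hxy => ⟨W6 ⊓ LinearMap.ker (gradAt ![x₀, y₀, z₀]), ?_, ?_⟩⟩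
  · ext f
    simp [singAt_iff_gradAt_eq_zero]
  · have : FiniteDimensional ℂ W6 := Module.finite_of_finrank_eq_succ finrank_W6
    obtain ⟨i, hi, hpi⟩ : ∃ i, w112 i = 1 ∧ ![x₀, y₀, z₀] i ≠ 0 := by
      by_cases hx : x₀ = 0
      · exact ⟨1, rfl, fun hy => hxy ⟨hx, hy⟩⟩
      · exact ⟨0, rfl, hx⟩
    have hsurj := map_gradAt_weightedHomogeneousSubmodule_eq_top (K := ℂ) (n := 6) (by norm_num)
      (by simp [Fin.forall_fin_succ, w112]) hi hpi
    have h := W6.finrank_inf_ker_add_finrank _ hsurj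
    rw [finrank_W6, Module.finrank_fin_fun] at h
    omega

end
end

section
/- Let Q be a nondegenerate quadratic form on ℂ³ with polar bilinear form B (so B(u,v) = Q(u+v) − Q(u) − Q(v)), and let C = {x ∈ P²(ℂ) : Q(x̂) = 0} be the associated smooth conic (where x̂ denotes any representative of x; the condition is independent of the representative). Then: (1) for every point p ∈ P²(ℂ) with Q(p̂) ≠ 0, the set {x ∈ C : B(p̂, x̂) = 0} has exactly two elements; and (2) the map sending such p to this two-element subset of C is a bijection from {p ∈ P²(ℂ) : Q(p̂) ≠ 0} onto the set of two-element subsets of C. -/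
/-!
Off the conic, `P` is anisotropic, so its polar plane `P^⊥` is a complement of `ℂ P`. Over
an algebraically closed field `P^⊥` contains an isotropic `a`, and nondegeneracy supplies
`b ∈ P^⊥` with `B(a, b) ≠ 0`; then `P^⊥` is a hyperbolic plane spanned by `a` and a second
isotropic vector `c`. Since `Q(s a + t c) = s t B(a, c)`, the only isotropic lines in `P^⊥`
are `ℂ a` and `ℂ c`.

Conversely, in dimension three a nondegenerate form has no totally isotropic plane, so two
distinct points `x, y` of the conic satisfy `B(x, y) ≠ 0`. The orthogonal of `span {x, y}` is a
line `ℂ P` (the pole of the line `xy`), `P` is off the conic, and its polar chord is `{x, y}`;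
the pole is unique, which gives injectivity.
-/

open scoped LinearAlgebra.Projectivization
open QuadraticMap

noncomputable section

/-- The complex projective plane `P²(ℂ)`, as the projectivization of `ℂ³`. -/
abbrev P2 : Type := ℙ ℂ (Fin 3 → ℂ)

open Module Projectivization LinearMap.BilinForm
open LinearMap (BilinForm)

theorem finrank_span_pair {K V : Type*} [Field K] [AddCommGroup V] [Module K V] {a c : V}
    (h : LinearIndependent K ![a, c]) : finrank K (Submodule.span K {a, c}) = 2 := by
  have := finrank_span_eq_card h
  rwa [Matrix.range_cons_cons_empty, Fintype.card_fin] at this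

namespace LinearMap.BilinForm

variable {K V : Type*} [Field K] [AddCommGroup V] [Module K V] {B : LinearMap.BilinForm K V}

theorem mem_orthogonal_span_iff {s : Set V} {x : V} :
    x ∈ B.orthogonal (Submodule.span K s) ↔ ∀ y ∈ s, B y x = 0 := by
  simp only [mem_orthogonal_iff]
  exact ⟨fun h y hy => h y (Submodule.subset_span hy),
    fun h y hy => (Submodule.span_le (p := LinearMap.ker (B.flip x))).mpr h hy⟩

variable [FiniteDimensional K V]

theorem two_mul_finrank_le_of_le_orthogonal (hB : B.Nondegenerate) {W : Submodule K V}
    (hW : W ≤ B.orthogonal W) : 2 * finrank K W ≤ finrank K V := by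
  have h₁ := Submodule.finrank_mono hW
  have h₂ := W.finrank_le
  rw [finrank_orthogonal hB] at h₁
  omega

end LinearMap.BilinForm

namespace QuadraticMap

variable {K V : Type*} [Field K] [AddCommGroup V] [Module K V] {Q : QuadraticForm K V}

theorem polar_self_eq_zero {a : V} (ha : Q a = 0) : polar Q a a = 0 := by
  rw [polar_self, ha, smul_zero]

theorem left_ne_zero_of_polar_ne_zero {a c : V} (h : polar Q a c ≠ 0) : a ≠ 0 := by
  rintro rfl; simp at h

theorem right_ne_zero_of_polar_ne_zero {a c : V} (h : polar Q a c ≠ 0) : c ≠ 0 := by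
  rintro rfl; simp at h

theorem map_smul_add_smul_of_isotropic {a c : V} (ha : Q a = 0) (hc : Q c = 0) (s t : K) :
    Q (s • a + t • c) = s * t * polar Q a c := by
  rw [QuadraticMap.map_add Q, QuadraticMap.map_smul, QuadraticMap.map_smul, polar_smul_left,
    polar_smul_right, ha, hc]
  simp only [smul_eq_mul]
  ring

theorem linearIndependent_of_polar_ne_zero {a c : V} (ha : Q a = 0) (hac : polar Q a c ≠ 0) :
    LinearIndependent K ![a, c] := by
  refine (LinearIndependent.pair_iff' (left_ne_zero_of_polar_ne_zero hac)).mpr fun s hs => hac ?_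
  rw [← hs, polar_smul_right, polar_self_eq_zero ha, smul_zero]

/-- The witness is `-Q(b) a + B(a, b) b`, spanning the second isotropic line of `⟨a, b⟩`. -/
theorem exists_isotropic_mem_span_pair {a b : V} (ha : Q a = 0) (hab : polar Q a b ≠ 0) :
    ∃ c ∈ Submodule.span K {a, b}, Q c = 0 ∧ polar Q a c ≠ 0 := by
  refine ⟨-Q b • a + polar Q a b • b, Submodule.mem_span_pair.mpr ⟨_, _, rfl⟩, ?_, ?_⟩
  · rw [QuadraticMap.map_add Q, QuadraticMap.map_smul, QuadraticMap.map_smul, polar_smul_left,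
      polar_smul_right, ha]
    simp only [smul_eq_mul]
    ring
  · rw [polar_add_right, polar_smul_right, polar_smul_right, polar_self_eq_zero ha]
    simpa using hab

theorem exists_map_smul_add_eq_zero [IsAlgClosed K] {e : V} (he : Q e ≠ 0) (f : V) :
    ∃ t : K, Q (t • e + f) = 0 := by
  open Polynomial in
  obtain ⟨t, ht⟩ := IsAlgClosed.exists_root (C (Q e) * X ^ 2 + C (polar Q e f) * X + C (Q f))
    (by rw [degree_quadratic he]; decide)
  refine ⟨t, ?_⟩
  rw [QuadraticMap.map_add Q, QuadraticMap.map_smul, polar_smul_left, smul_eq_mul, smul_eq_mul]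
  simp only [IsRoot, eval_add, eval_mul, eval_C, eval_pow, eval_X] at ht
  linear_combination ht

theorem exists_isotropic_mem_of_two_le_finrank [IsAlgClosed K] (W : Submodule K V)
    (hW : 2 ≤ finrank K W) : ∃ a ∈ W, a ≠ 0 ∧ Q a = 0 := by
  obtain ⟨e, heW, he⟩ := W.exists_mem_ne_zero_of_ne_bot (by rintro rfl; simp at hW)
  by_cases hQe : Q e = 0
  · exact ⟨e, heW, he, hQe⟩
  have hlt : K ∙ e < W := by
    refine lt_of_le_of_ne ((Submodule.span_singleton_le_iff_mem e W).mpr heW) ?_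
    rintro rfl
    rw [finrank_span_singleton he] at hW
    omega
  obtain ⟨f, hfW, hf⟩ := SetLike.exists_of_lt hlt
  obtain ⟨t, ht⟩ := exists_map_smul_add_eq_zero hQe f
  refine ⟨t • e + f, W.add_mem (W.smul_mem t heW) hfW, ?_, ht⟩
  intro h
  exact hf (Submodule.mem_span_singleton.mpr ⟨-t, by rw [neg_smul, neg_eq_iff_add_eq_zero, h]⟩)

theorem mem_orthogonal_span_singleton_iff {P x : V} :
    x ∈ BilinForm.orthogonal (polarBilin Q) (K ∙ P) ↔ polar Q P x = 0 := by
  rw [mem_orthogonal_span_iff]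
  simp

theorem mem_orthogonal_span_pair_iff {a c x : V} :
    x ∈ BilinForm.orthogonal (polarBilin Q) (Submodule.span K {a, c}) ↔
      polar Q x a = 0 ∧ polar Q x c = 0 := by
  rw [mem_orthogonal_span_iff]
  simp [polar_comm Q x]

theorem exists_polar_ne_zero_polar_eq_zero [NeZero (2 : K)]
    (hQ : (polarBilin Q).Nondegenerate) {P a : V} (hP : Q P ≠ 0)
    (ha : a ≠ 0) (hPa : polar Q P a = 0) : ∃ b, polar Q P b = 0 ∧ polar Q a b ≠ 0 := by
  obtain ⟨z, hz⟩ : ∃ z, polar Q a z ≠ 0 := by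
    by_contra! h
    exact ha (hQ.1 a (by simpa using h))
  have hPP : polar Q P P ≠ 0 := by
    rw [polar_self, nsmul_eq_mul]
    exact mul_ne_zero (NeZero.ne _) hP
  refine ⟨z - (polar Q P z / polar Q P P) • P, ?_, ?_⟩
  · rw [polar_sub_right, polar_smul_right, smul_eq_mul, div_mul_cancel₀ _ hPP, sub_self]
  · rwa [polar_sub_right, polar_smul_right, polar_comm Q a P, hPa, smul_zero, sub_zero]

variable [FiniteDimensional K V]

theorem polar_ne_zero_of_linearIndependent (hQ : (polarBilin Q).Nondegenerate)
    (hV : finrank K V ≤ 3) {a c : V} (ha : Q a = 0) (hc : Q c = 0)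
    (hac : LinearIndependent K ![a, c]) : polar Q a c ≠ 0 := by
  intro h
  have hca : polar Q c a = 0 := by rwa [polar_comm]
  have hW : Submodule.span K {a, c} ≤
      BilinForm.orthogonal (polarBilin Q) (Submodule.span K {a, c}) := by
    refine Submodule.span_le.mpr fun x hx => mem_orthogonal_span_iff.mpr fun y hy => ?_
    rcases hx with rfl | rfl <;> rcases hy with rfl | rfl
    exacts [polar_self_eq_zero ha, hca, h, polar_self_eq_zero hc]
  have := two_mul_finrank_le_of_le_orthogonal hQ hW
  rw [finrank_span_pair hac] at this
  omega

theorem exists_hyperbolic_pair_polar_eq_zero [IsAlgClosed K] [NeZero (2 : K)]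
    (hQ : (polarBilin Q).Nondegenerate) (hV : 3 ≤ finrank K V) {P : V} (hP : Q P ≠ 0) :
    ∃ a c, Q a = 0 ∧ Q c = 0 ∧ polar Q P a = 0 ∧ polar Q P c = 0 ∧ polar Q a c ≠ 0 := by
  set H := BilinForm.orthogonal (polarBilin Q) (K ∙ P)
  have hP₀ : P ≠ 0 := by rintro rfl; simp at hP
  have hH : 2 ≤ finrank K H := by
    rw [finrank_orthogonal hQ, finrank_span_singleton hP₀]
    omega
  obtain ⟨a, haH, ha₀, ha⟩ := exists_isotropic_mem_of_two_le_finrank H hH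
  have hPa := mem_orthogonal_span_singleton_iff.mp haH
  obtain ⟨b, hPb, hab⟩ := exists_polar_ne_zero_polar_eq_zero hQ hP ha₀ hPa
  obtain ⟨c, hc, hQc, hac⟩ := exists_isotropic_mem_span_pair ha hab
  have hcH : c ∈ H := Submodule.span_le.mpr (Set.insert_subset haH
    (Set.singleton_subset_iff.mpr (mem_orthogonal_span_singleton_iff.mpr hPb))) hc
  exact ⟨a, c, ha, hQc, hPa, mem_orthogonal_span_singleton_iff.mp hcH, hac⟩

theorem map_eq_zero_and_polar_eq_zero_iff (hQ : (polarBilin Q).Nondegenerate)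
    (hV : finrank K V = 3) {P a c : V} (hP : P ≠ 0) (ha : Q a = 0) (hc : Q c = 0)
    (hPa : polar Q P a = 0) (hPc : polar Q P c = 0) (hac : polar Q a c ≠ 0) (x : V) :
    Q x = 0 ∧ polar Q P x = 0 ↔ (∃ s : K, s • a = x) ∨ ∃ t : K, t • c = x := by
  have hspan : Submodule.span K {a, c} = BilinForm.orthogonal (polarBilin Q) (K ∙ P) := by
    refine Submodule.eq_of_le_of_finrank_eq (Submodule.span_le.mpr ?_) ?_
    · exact Set.insert_subset (mem_orthogonal_span_singleton_iff.mpr hPa)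
        (Set.singleton_subset_iff.mpr (mem_orthogonal_span_singleton_iff.mpr hPc))
    · rw [finrank_span_pair (linearIndependent_of_polar_ne_zero ha hac),
        finrank_orthogonal hQ, finrank_span_singleton hP, hV]
  constructor
  · rintro ⟨hx, hPx⟩
    obtain ⟨s, t, rfl⟩ := Submodule.mem_span_pair.mp
      (hspan ▸ mem_orthogonal_span_singleton_iff.mpr hPx)
    rw [map_smul_add_smul_of_isotropic ha hc, mul_eq_zero, mul_eq_zero] at hx
    rcases hx with (rfl | rfl) | hac'
    · exact Or.inr ⟨t, by simp⟩
    · exact Or.inl ⟨s, by simp⟩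
    · exact absurd hac' hac
  · rintro (⟨s, rfl⟩ | ⟨t, rfl⟩)
    · simp [QuadraticMap.map_smul, polar_smul_right, ha, hPa]
    · simp [QuadraticMap.map_smul, polar_smul_right, hc, hPc]

theorem map_ne_zero_of_polar_eq_zero (hQ : (polarBilin Q).Nondegenerate) (hV : finrank K V ≤ 3)
    {a c P : V} (ha : Q a = 0) (hac : polar Q a c ≠ 0) (hP : P ≠ 0) (hPa : polar Q P a = 0)
    (hPc : polar Q P c = 0) : Q P ≠ 0 := by
  intro hQP
  have hdep : ¬LinearIndependent K ![a, P] := fun h =>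
    polar_ne_zero_of_linearIndependent hQ hV ha hQP h (by rwa [polar_comm])
  obtain ⟨s, rfl⟩ : ∃ s : K, s • a = P := by
    simpa [LinearIndependent.pair_iff' (left_ne_zero_of_polar_ne_zero hac)] using hdep
  rw [polar_smul_left, smul_eq_mul, mul_eq_zero] at hPc
  rcases hPc with rfl | h
  · exact hP (zero_smul K a)
  · exact hac h

theorem finrank_orthogonal_span_pair (hQ : (polarBilin Q).Nondegenerate) (hV : finrank K V = 3)
    {a c : V} (hac : LinearIndependent K ![a, c]) :
    finrank K (BilinForm.orthogonal (polarBilin Q) (Submodule.span K {a, c})) = 1 := by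
  rw [finrank_orthogonal hQ, finrank_span_pair hac, hV]

end QuadraticMap

section Projective

variable {K V : Type*} [Field K] [AddCommGroup V] [Module K V] {Q : QuadraticForm K V}

theorem map_rep_mk_eq_zero_iff {v : V} (hv : v ≠ 0) : Q (mk K v hv).rep = 0 ↔ Q v = 0 := by
  obtain ⟨u, hu⟩ := exists_smul_eq_mk_rep K v hv
  simp [← hu, Units.smul_def, QuadraticMap.map_smul]

theorem polar_rep_mk_eq_zero_iff {w v : V} (hv : v ≠ 0) :
    polar Q w (mk K v hv).rep = 0 ↔ polar Q w v = 0 := by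
  obtain ⟨u, hu⟩ := exists_smul_eq_mk_rep K v hv
  simp [← hu, Units.smul_def, polar_smul_right]

variable (Q) in
def polarChord (P : V) : Set (ℙ K V) :=
  {x | Q x.rep = 0 ∧ polar Q P x.rep = 0}

theorem mk_mem_polarChord_iff {P v : V} (hv : v ≠ 0) :
    mk K v hv ∈ polarChord Q P ↔ Q v = 0 ∧ polar Q P v = 0 := by
  rw [polarChord, Set.mem_ofPred_eq, map_rep_mk_eq_zero_iff, polar_rep_mk_eq_zero_iff]

theorem polarChord_rep_mk {P : V} (hP : P ≠ 0) :
    polarChord Q (mk K P hP).rep = polarChord Q P := by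
  ext x
  simp only [polarChord, Set.mem_ofPred_eq, polar_comm Q _ x.rep, polar_rep_mk_eq_zero_iff]

theorem mk_ne_mk_of_polar_ne_zero {a c : V} (ha₀ : a ≠ 0) (hc₀ : c ≠ 0) (ha : Q a = 0)
    (hac : polar Q a c ≠ 0) : mk K a ha₀ ≠ mk K c hc₀ := by
  rw [← independent_pair_iff_ne, independent_mk_iff_LinearIndependent]
  exact linearIndependent_of_polar_ne_zero ha hac

variable [FiniteDimensional K V]

theorem polarChord_eq_pair (hQ : (polarBilin Q).Nondegenerate) (hV : finrank K V = 3)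
    {P a c : V} (hP : P ≠ 0) (ha₀ : a ≠ 0) (hc₀ : c ≠ 0) (ha : Q a = 0) (hc : Q c = 0)
    (hPa : polar Q P a = 0) (hPc : polar Q P c = 0) (hac : polar Q a c ≠ 0) :
    polarChord Q P = {mk K a ha₀, mk K c hc₀} := by
  ext x
  rw [← mk_rep x, mk_mem_polarChord_iff,
    map_eq_zero_and_polar_eq_zero_iff hQ hV hP ha hc hPa hPc hac, Set.mem_insert_iff,
    Set.mem_singleton_iff, mk_eq_mk_iff', mk_eq_mk_iff']

theorem ncard_polarChord [IsAlgClosed K] [NeZero (2 : K)] (hQ : (polarBilin Q).Nondegenerate)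
    (hV : finrank K V = 3) {P : V} (hP : Q P ≠ 0) : (polarChord Q P).ncard = 2 := by
  obtain ⟨a, c, ha, hc, hPa, hPc, hac⟩ := exists_hyperbolic_pair_polar_eq_zero hQ hV.ge hP
  have ha₀ := left_ne_zero_of_polar_ne_zero hac
  have hc₀ := right_ne_zero_of_polar_ne_zero hac
  have hP₀ : P ≠ 0 := by rintro rfl; simp at hP
  rw [polarChord_eq_pair hQ hV hP₀ ha₀ hc₀ ha hc hPa hPc hac,
    Set.ncard_pair (mk_ne_mk_of_polar_ne_zero ha₀ hc₀ ha hac)]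

theorem mk_eq_mk_of_polar_eq_zero (hQ : (polarBilin Q).Nondegenerate) (hV : finrank K V = 3)
    {a c P P' : V} (ha : Q a = 0) (hac : polar Q a c ≠ 0) (hP : P ≠ 0) (hP' : P' ≠ 0)
    (hPa : polar Q P a = 0) (hPc : polar Q P c = 0) (hP'a : polar Q P' a = 0)
    (hP'c : polar Q P' c = 0) : mk K P hP = mk K P' hP' := by
  have hL := finrank_orthogonal_span_pair hQ hV (linearIndependent_of_polar_ne_zero ha hac)
  let x : BilinForm.orthogonal (polarBilin Q) (Submodule.span K {a, c}) :=
    ⟨P, mem_orthogonal_span_pair_iff.mpr ⟨hPa, hPc⟩⟩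
  let x' : BilinForm.orthogonal (polarBilin Q) (Submodule.span K {a, c}) :=
    ⟨P', mem_orthogonal_span_pair_iff.mpr ⟨hP'a, hP'c⟩⟩
  obtain ⟨s, hs⟩ := (finrank_eq_one_iff_of_nonzero' x' (by simpa [x'] using hP')).mp hL x
  exact (mk_eq_mk_iff' K P P' hP hP').mpr ⟨s, congrArg Subtype.val hs⟩

theorem exists_polar_eq_zero_of_linearIndependent (hQ : (polarBilin Q).Nondegenerate)
    (hV : finrank K V = 3) {a c : V} (hac : LinearIndependent K ![a, c]) :
    ∃ P ≠ 0, polar Q P a = 0 ∧ polar Q P c = 0 := by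
  obtain ⟨P, hPL, hP⟩ := Submodule.exists_mem_ne_zero_of_ne_bot (p := BilinForm.orthogonal
    (polarBilin Q) (Submodule.span K {a, c})) (by
      intro h
      have := finrank_orthogonal_span_pair hQ hV hac
      rw [h, finrank_bot] at this
      exact zero_ne_one this)
  exact ⟨P, hP, mem_orthogonal_span_pair_iff.mp hPL⟩

theorem polarChord_injOn [IsAlgClosed K] [NeZero (2 : K)] (hQ : (polarBilin Q).Nondegenerate)
    (hV : finrank K V = 3) :
    Set.InjOn (fun p : ℙ K V => polarChord Q p.rep) {p | Q p.rep ≠ 0} := by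
  intro p hp q _ (hpq : polarChord Q p.rep = polarChord Q q.rep)
  obtain ⟨a, c, ha, hc, hpa, hpc, hac⟩ := exists_hyperbolic_pair_polar_eq_zero hQ hV.ge hp
  have ha₀ := left_ne_zero_of_polar_ne_zero hac
  have hc₀ := right_ne_zero_of_polar_ne_zero hac
  have hchord : polarChord Q q.rep = {mk K a ha₀, mk K c hc₀} := by
    rw [← hpq, polarChord_eq_pair hQ hV p.rep_nonzero ha₀ hc₀ ha hc hpa hpc hac]
  have hqa := (mk_mem_polarChord_iff ha₀).mp (hchord ▸ Set.mem_insert _ _) |>.2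
  have hqc := (mk_mem_polarChord_iff hc₀).mp
    (hchord ▸ Set.mem_insert_of_mem _ (Set.mem_singleton _)) |>.2
  rw [← mk_rep p, ← mk_rep q]
  exact mk_eq_mk_of_polar_eq_zero hQ hV ha hac _ _ hpa hpc hqa hqc

theorem polarChord_surjOn (hQ : (polarBilin Q).Nondegenerate) (hV : finrank K V = 3) :
    Set.SurjOn (fun p : ℙ K V => polarChord Q p.rep) {p | Q p.rep ≠ 0}
      {s | s ⊆ {x | Q x.rep = 0} ∧ s.ncard = 2} := by
  rintro s ⟨hsC, hs⟩
  obtain ⟨x, y, hxy, rfl⟩ := Set.ncard_eq_two.mp hs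
  have hx : Q x.rep = 0 := hsC (Set.mem_insert _ _)
  have hy : Q y.rep = 0 := hsC (Set.mem_insert_of_mem _ rfl)
  have hind : LinearIndependent K ![x.rep, y.rep] := by
    rw [← independent_mk_iff_LinearIndependent x.rep_nonzero y.rep_nonzero, mk_rep, mk_rep]
    exact (independent_pair_iff_ne x y).mpr hxy
  have hxy' := polar_ne_zero_of_linearIndependent hQ hV.le hx hy hind
  obtain ⟨P, hP, hPx, hPy⟩ := exists_polar_eq_zero_of_linearIndependent hQ hV hind
  have hQP := map_ne_zero_of_polar_eq_zero hQ hV.le hx hxy' hP hPx hPy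
  refine ⟨mk K P hP, (map_rep_mk_eq_zero_iff hP).not.mpr hQP, ?_⟩
  dsimp only
  rw [polarChord_rep_mk,
    polarChord_eq_pair hQ hV hP x.rep_nonzero y.rep_nonzero hx hy hPx hPy hxy', mk_rep, mk_rep]

end Projective

/-- Let `Q` be a nondegenerate quadratic form on `ℂ³`, with polar form
`B(u,v) = Q(u+v) − Q(u) − Q(v)`, and let `C ⊆ P²(ℂ)` be the smooth conic `Q = 0`. Then for
every point `p` with `Q(p̂) ≠ 0`, the polar line of `p` meets `C` in exactly two points, and
`p ↦ (polar line of p) ∩ C` is a bijection from the complement of `C` onto the set of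
two-element subsets of `C`. -/
theorem polar_bijection_complement_conic_two_subsets
    (Q : QuadraticForm ℂ (Fin 3 → ℂ))
    (hQ : ∀ u : Fin 3 → ℂ, (∀ v : Fin 3 → ℂ, polar Q u v = 0) → u = 0) :
    (∀ p : P2, Q p.rep ≠ 0 →
      Set.ncard {x : P2 | Q x.rep = 0 ∧ polar Q p.rep x.rep = 0} = 2) ∧
    Set.BijOn (fun p : P2 => {x : P2 | Q x.rep = 0 ∧ polar Q p.rep x.rep = 0})
      {p : P2 | Q p.rep ≠ 0}
      {s : Set P2 | s ⊆ {x : P2 | Q x.rep = 0} ∧ s.ncard = 2} := by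
  have hB : (polarBilin Q).Nondegenerate :=
    ⟨fun u hu => hQ u (by simpa using hu),
      fun u hu => hQ u fun v => by simpa [polar_comm Q u] using hu v⟩
  have hV : finrank ℂ (Fin 3 → ℂ) = 3 := by simp
  have hcard : ∀ p : P2, Q p.rep ≠ 0 → (polarChord Q p.rep).ncard = 2 :=
    fun p hp => ncard_polarChord hB hV hp
  exact ⟨hcard, fun p hp => ⟨fun x hx => hx.1, hcard p hp⟩, polarChord_injOn hB hV,
    polarChord_surjOn hB hV⟩

end
end
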